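/- Let q ≥ 2 and η_1,...,η_q be q-th Tsuji points of a compact set D ⊂ 𝔻. Then there exists an index ℓ such that ∏_{k≠ℓ}[η_ℓ,η_k]_h ≤ (∏_{1≤k<l≤q}[η_k,η_l]_h)^{2/q}, and consequently max_{z∈D} (∏_{k=1}^q [z,η_k]_h)^{1/q} ≤ (∏_{1≤k<l≤q}[η_k,η_l]_h)^{2/q²}. -/

import Mathlib

/-!
Since `[·,·]_h` is symmetric, the square of the pair product is the product over `l` of the row
products `A l = ∏_{k ≠ l} [η_l, η_k]_h`, so the smallest row product is at most
`(∏_{k<l} [η_k, η_l]_h)^{2/q}`. Replacing `η_l` by `z ∈ D` changes only the `l`-th row and column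
of the off-diagonal product, and the remaining factor is positive because `D` has `q` distinct
points, so maximality of `η` gives `∏_{k ≠ l} [z, η_k]_h ≤ A l`. Dropping the factor
`[z, η_l]_h < 1` then bounds `∏_k [z, η_k]_h` by the smallest row product.
-/

noncomputable def pseudoHyp (z μ : ℂ) : ℝ := ‖(z - μ) / (1 - (starRingEnd ℂ) μ * z)‖

noncomputable def pairProd (q : ℕ) (μ : Fin q → ℂ) : ℝ :=
  ∏ p ∈ Finset.univ.filter (fun p : Fin q × Fin q => p.1 < p.2), pseudoHyp (μ p.1) (μ p.2)

open Finset ComplexConjugate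

namespace Finset

variable {ι M : Type*} [CommMonoid M]

theorem prod_offDiag_eq_prod_prod_erase [DecidableEq ι] (s : Finset ι) (f : ι → ι → M) :
    ∏ p ∈ s.offDiag, f p.1 p.2 = ∏ i ∈ s, ∏ j ∈ s.erase i, f i j :=
  prod_finset_product' _ _ _ fun p => by grind

theorem prod_offDiag_eq_sq_mul_of_mem [DecidableEq ι] {s : Finset ι} {a : ι} (ha : a ∈ s)
    {f : ι → ι → M} (hf : ∀ i j, f i j = f j i) :
    ∏ p ∈ s.offDiag, f p.1 p.2
      = (∏ j ∈ s.erase a, f a j) ^ 2 * ∏ p ∈ (s.erase a).offDiag, f p.1 p.2 := by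
  rw [← insert_erase ha, offDiag_insert (notMem_erase a s), prod_union, prod_union,
    prod_product, prod_product, erase_insert (notMem_erase a s)]
  · simp only [prod_singleton, hf _ a]
    rw [mul_assoc, ← sq, mul_comm]
  all_goals grind [disjoint_left]

theorem sq_prod_filter_lt_eq_prod_offDiag [Fintype ι] [LinearOrder ι] {f : ι → ι → M}
    (hf : ∀ i j, f i j = f j i) :
    (∏ p ∈ univ.filter (fun p : ι × ι => p.1 < p.2), f p.1 p.2) ^ 2
      = ∏ p ∈ univ.offDiag, f p.1 p.2 := by
  have hsplit : univ.offDiag = univ.filter (fun p : ι × ι => p.1 < p.2)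
      ∪ univ.filter (fun p : ι × ι => p.2 < p.1) := by grind
  rw [hsplit, prod_union (disjoint_filter.2 fun p _ h => h.asymm), sq]
  congr 1
  exact prod_nbij' Prod.swap Prod.swap (by simp) (by simp) (by simp) (by simp) fun p _ => hf _ _

theorem exists_pow_card_le_prod {R : Type*} [CommMonoidWithZero R] [LinearOrder R]
    [ZeroLEOneClass R] [PosMulMono R] {s : Finset ι} (hs : s.Nonempty) {f : ι → R}
    (hf : ∀ i ∈ s, 0 ≤ f i) : ∃ i ∈ s, f i ^ #s ≤ ∏ j ∈ s, f j := by
  obtain ⟨i, hi, hmin⟩ := s.exists_min_image f hs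
  refine ⟨i, hi, ?_⟩
  rw [← prod_const]
  exact prod_le_prod (fun _ _ => hf i hi) hmin

end Finset

theorem Real.le_rpow_div_of_pow_le {x y : ℝ} {m n : ℕ} (hx : 0 ≤ x) (hy : 0 ≤ y) (hn : 0 < n)
    (h : x ^ n ≤ y ^ m) : x ≤ y ^ ((m : ℝ) / n) := by
  rw [div_eq_mul_inv, Real.rpow_mul hy, Real.rpow_natCast,
    Real.le_rpow_inv_iff_of_pos hx (pow_nonneg hy m) (Nat.cast_pos.2 hn), Real.rpow_natCast]
  exact h

namespace Complex

theorem normSq_one_sub_conj_mul_sub_normSq_sub (z μ : ℂ) :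
    normSq (1 - conj μ * z) - normSq (z - μ) = (1 - normSq μ) * (1 - normSq z) := by
  simp only [normSq_apply, sub_re, sub_im, mul_re, mul_im, one_re, one_im, conj_re, conj_im]
  ring

theorem normSq_sub_lt_normSq_one_sub_conj_mul {z μ : ℂ} (hz : ‖z‖ < 1) (hμ : ‖μ‖ < 1) :
    normSq (z - μ) < normSq (1 - conj μ * z) := by
  have hlt : ∀ w : ℂ, ‖w‖ < 1 → 0 < 1 - normSq w := fun w hw => by
    rw [normSq_eq_norm_sq, sub_pos]
    exact pow_lt_one₀ (norm_nonneg w) hw two_ne_zero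
  linarith [normSq_one_sub_conj_mul_sub_normSq_sub z μ, mul_pos (hlt μ hμ) (hlt z hz)]

theorem one_sub_conj_mul_ne_zero {z μ : ℂ} (hz : ‖z‖ < 1) (hμ : ‖μ‖ < 1) :
    1 - conj μ * z ≠ 0 :=
  normSq_pos.1 <| (normSq_nonneg _).trans_lt (normSq_sub_lt_normSq_one_sub_conj_mul hz hμ)

end Complex

theorem pseudoHyp_nonneg (z μ : ℂ) : 0 ≤ pseudoHyp z μ := norm_nonneg _

theorem pseudoHyp_comm (z μ : ℂ) : pseudoHyp z μ = pseudoHyp μ z := by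
  rw [pseudoHyp, pseudoHyp, norm_div, norm_div, norm_sub_rev, ← Complex.norm_conj (1 - _)]
  simp [mul_comm]

theorem pseudoHyp_lt_one {z μ : ℂ} (hz : ‖z‖ < 1) (hμ : ‖μ‖ < 1) : pseudoHyp z μ < 1 := by
  have h := Complex.normSq_sub_lt_normSq_one_sub_conj_mul hz hμ
  rw [Complex.normSq_eq_norm_sq, Complex.normSq_eq_norm_sq] at h
  rw [pseudoHyp, norm_div, div_lt_one (norm_pos_iff.2 (Complex.one_sub_conj_mul_ne_zero hz hμ))]
  exact lt_of_pow_lt_pow_left₀ 2 (norm_nonneg _) h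

theorem pseudoHyp_pos {z μ : ℂ} (hz : ‖z‖ < 1) (hμ : ‖μ‖ < 1) (hne : z ≠ μ) :
    0 < pseudoHyp z μ := by
  rw [pseudoHyp, norm_div]
  exact div_pos (norm_pos_iff.2 (sub_ne_zero.2 hne))
    (norm_pos_iff.2 (Complex.one_sub_conj_mul_ne_zero hz hμ))

theorem pairProd_nonneg (q : ℕ) (μ : Fin q → ℂ) : 0 ≤ pairProd q μ :=
  prod_nonneg fun _ _ => pseudoHyp_nonneg _ _

theorem pairProd_pos {q : ℕ} {μ : Fin q → ℂ} (hinj : Function.Injective μ)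
    (hμ : ∀ i, ‖μ i‖ < 1) : 0 < pairProd q μ :=
  prod_pos fun _ hp => pseudoHyp_pos (hμ _) (hμ _) (hinj.ne (mem_filter.1 hp).2.ne)

theorem sq_pairProd (q : ℕ) (μ : Fin q → ℂ) :
    pairProd q μ ^ 2 = ∏ l, ∏ k ∈ univ.erase l, pseudoHyp (μ l) (μ k) :=
  (sq_prod_filter_lt_eq_prod_offDiag (f := fun i j => pseudoHyp (μ i) (μ j))
    fun _ _ => pseudoHyp_comm _ _).trans
    (prod_offDiag_eq_prod_prod_erase univ fun i j => pseudoHyp (μ i) (μ j))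

theorem sq_pairProd_eq_sq_mul (q : ℕ) (μ : Fin q → ℂ) (l : Fin q) :
    pairProd q μ ^ 2 = (∏ k ∈ univ.erase l, pseudoHyp (μ l) (μ k)) ^ 2
      * ∏ p ∈ (univ.erase l).offDiag, pseudoHyp (μ p.1) (μ p.2) :=
  (sq_prod_filter_lt_eq_prod_offDiag (f := fun i j => pseudoHyp (μ i) (μ j))
    fun _ _ => pseudoHyp_comm _ _).trans
    (prod_offDiag_eq_sq_mul_of_mem (f := fun i j => pseudoHyp (μ i) (μ j)) (mem_univ l)
      fun _ _ => pseudoHyp_comm _ _)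

theorem exists_prod_erase_pseudoHyp_le_pairProd_rpow {q : ℕ} (μ : Fin q → ℂ) (hq : 0 < q) :
    ∃ l : Fin q, ∏ k ∈ univ.erase l, pseudoHyp (μ l) (μ k) ≤ pairProd q μ ^ ((2 : ℝ) / q) := by
  obtain ⟨l, -, hl⟩ := exists_pow_card_le_prod (univ_nonempty_iff.2 ⟨⟨0, hq⟩⟩)
    fun l (_ : l ∈ univ) => prod_nonneg fun k _ => pseudoHyp_nonneg (μ l) (μ k)
  rw [card_univ, Fintype.card_fin, ← sq_pairProd] at hl
  exact ⟨l, by exact_mod_cast Real.le_rpow_div_of_pow_le (prod_nonneg fun _ _ =>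
    pseudoHyp_nonneg _ _) (pairProd_nonneg q μ) hq hl⟩

theorem prod_erase_pseudoHyp_le_of_forall_pairProd_le {q : ℕ} {D : Set ℂ} {η : Fin q → ℂ}
    (hη : ∀ k, η k ∈ D)
    (hmax : ∀ μ : Fin q → ℂ, (∀ k, μ k ∈ D) → pairProd q μ ≤ pairProd q η)
    (hpos : 0 < pairProd q η) {z : ℂ} (hz : z ∈ D) (l : Fin q) :
    ∏ k ∈ univ.erase l, pseudoHyp z (η k) ≤ ∏ k ∈ univ.erase l, pseudoHyp (η l) (η k) := by
  set μ := Function.update η l z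
  have hμD : ∀ k, μ k ∈ D := fun k => by
    rcases eq_or_ne k l with rfl | hk <;> simp [μ, *]
  have hrow : ∏ k ∈ univ.erase l, pseudoHyp (μ l) (μ k)
      = ∏ k ∈ univ.erase l, pseudoHyp z (η k) :=
    prod_congr rfl fun k hk => by simp [μ, ne_of_mem_erase hk]
  have hrest : ∏ p ∈ (univ.erase l).offDiag, pseudoHyp (μ p.1) (μ p.2)
      = ∏ p ∈ (univ.erase l).offDiag, pseudoHyp (η p.1) (η p.2) :=
    prod_congr rfl fun p hp => by
      obtain ⟨h1, h2, -⟩ := mem_offDiag.1 hp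
      simp [μ, ne_of_mem_erase h1, ne_of_mem_erase h2]
  have hsq : pairProd q μ ^ 2 ≤ pairProd q η ^ 2 :=
    pow_le_pow_left₀ (pairProd_nonneg q μ) (hmax μ hμD) 2
  have hrest_pos : 0 < ∏ p ∈ (univ.erase l).offDiag, pseudoHyp (η p.1) (η p.2) := by
    have := pow_pos hpos 2
    rw [sq_pairProd_eq_sq_mul q η l] at this
    exact pos_of_mul_pos_right this (sq_nonneg _)
  rw [sq_pairProd_eq_sq_mul q μ l, sq_pairProd_eq_sq_mul q η l, hrow, hrest] at hsq
  exact (pow_le_pow_iff_left₀ (prod_nonneg fun _ _ => pseudoHyp_nonneg _ _)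
    (prod_nonneg fun _ _ => pseudoHyp_nonneg _ _) two_ne_zero).1
    (le_of_mul_le_mul_right hsq hrest_pos)

theorem tsuji_points_chebyshev_bound_general (q : ℕ) (hq : 2 ≤ q) (D : Set ℂ)
    (hD : D ⊆ {z : ℂ | ‖z‖ < 1})
    (hcard : ∃ f : Fin q → ℂ, Function.Injective f ∧ ∀ i, f i ∈ D)
    (η : Fin q → ℂ) (hη : ∀ k, η k ∈ D)
    (hmax : ∀ μ : Fin q → ℂ, (∀ k, μ k ∈ D) → pairProd q μ ≤ pairProd q η) :
    (∃ l : Fin q, ∏ k ∈ Finset.univ.erase l, pseudoHyp (η l) (η k)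
        ≤ pairProd q η ^ ((2 : ℝ) / q)) ∧
    ∀ z ∈ D, (∏ k, pseudoHyp z (η k)) ^ ((1 : ℝ) / q)
        ≤ pairProd q η ^ ((2 : ℝ) / (q ^ 2 : ℕ)) := by
  have hpos : 0 < pairProd q η := by
    obtain ⟨f, hf, hfD⟩ := hcard
    exact (pairProd_pos hf fun i => hD (hfD i)).trans_le (hmax f hfD)
  obtain ⟨l, hl⟩ := exists_prod_erase_pseudoHyp_le_pairProd_rpow η (by omega)
  refine ⟨⟨l, hl⟩, fun z hz => ?_⟩
  have hprod : ∏ k, pseudoHyp z (η k) ≤ pairProd q η ^ ((2 : ℝ) / q) :=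
    calc ∏ k, pseudoHyp z (η k) = pseudoHyp z (η l) * ∏ k ∈ univ.erase l, pseudoHyp z (η k) :=
          (mul_prod_erase _ _ (mem_univ l)).symm
      _ ≤ ∏ k ∈ univ.erase l, pseudoHyp z (η k) :=
          mul_le_of_le_one_left (prod_nonneg fun _ _ => pseudoHyp_nonneg _ _)
            (pseudoHyp_lt_one (hD hz) (hD (hη l))).le
      _ ≤ ∏ k ∈ univ.erase l, pseudoHyp (η l) (η k) :=
          prod_erase_pseudoHyp_le_of_forall_pairProd_le hη hmax hpos hz l
      _ ≤ _ := hl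
  calc (∏ k, pseudoHyp z (η k)) ^ ((1 : ℝ) / q)
      ≤ (pairProd q η ^ ((2 : ℝ) / q)) ^ ((1 : ℝ) / q) :=
        Real.rpow_le_rpow (prod_nonneg fun _ _ => pseudoHyp_nonneg _ _) hprod (by positivity)
    _ = pairProd q η ^ ((2 : ℝ) / (q ^ 2 : ℕ)) := by
        rw [← Real.rpow_mul (pairProd_nonneg q η)]
        push_cast
        ring_nf

theorem tsuji_points_chebyshev_bound (q : ℕ) (hq : 2 ≤ q) (D : Set ℂ)
    (hDc : IsCompact D) (hD : D ⊆ {z : ℂ | ‖z‖ < 1})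
    (hcard : ∃ f : Fin q → ℂ, Function.Injective f ∧ ∀ i, f i ∈ D)
    (η : Fin q → ℂ) (hη : ∀ k, η k ∈ D)
    (hmax : ∀ μ : Fin q → ℂ, (∀ k, μ k ∈ D) → pairProd q μ ≤ pairProd q η) :
    (∃ l : Fin q, ∏ k ∈ Finset.univ.erase l, pseudoHyp (η l) (η k)
        ≤ pairProd q η ^ ((2 : ℝ) / q)) ∧
    ∀ z ∈ D, (∏ k, pseudoHyp z (η k)) ^ ((1 : ℝ) / q)
        ≤ pairProd q η ^ ((2 : ℝ) / (q ^ 2 : ℕ)) :=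
  tsuji_points_chebyshev_bound_general q hq D hD hcard η hη hmax
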